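/- Let p and q be distinct primes with p not dividing q−1. Then the number of conjugacy classes of elements of SU(p) of order exactly q none of whose eigenvalues equals 1 is (q−1) times SpCG(SU(p), Z_q), the number of conjugacy classes of special cyclic subgroups of SU(p) of order q. -/

import Mathlib

/-!
Let `g ∈ SU(p)` have order `q` and no eigenvalue `1`. Its eigenvalues are `ζ ^ u` for units `u`
of `ZMod q`; let `c u` be their multiplicities, which sum to `p`. Since `g ^ q = 1`, `g` is
semisimple, and the `λ`-eigenspace of `g` is the `λ ^ k`-eigenspace of `g ^ k` for every unit `k`.
So if `g` is conjugate to `g ^ k`, comparing characteristic polynomials gives `c (u * k) = c u`: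
`c` is constant on the cosets of `⟨k⟩`, whence `orderOf k ∣ p`. Together with
`orderOf k ∣ q - 1` and `p ∤ q - 1` this forces `k = 1`. Hence `(k, [⟨g⟩]) ↦ [g ^ k]` is a
bijection from `(ZMod q)ˣ × {special subgroups}/conj` onto the conjugacy classes counted.
-/

open Polynomial Finset

noncomputable instance (n : ℕ) : Group (Matrix.specialUnitaryGroup (Fin n) ℂ) :=
  { (inferInstance : Monoid (Matrix.specialUnitaryGroup (Fin n) ℂ)) with
    inv := fun A => ⟨star A.1, by
      have hA := Matrix.mem_specialUnitaryGroup_iff.mp A.2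
      rw [Matrix.mem_specialUnitaryGroup_iff]
      refine ⟨Unitary.star_mem hA.1, ?_⟩
      rw [Matrix.star_eq_conjTranspose, Matrix.det_conjTranspose, hA.2, star_one]⟩
    inv_mul_cancel := fun A => Subtype.ext ((Unitary.mem_iff.mp
      (Matrix.mem_specialUnitaryGroup_iff.mp A.2).1).1) }

/-- A subgroup of `SU(n)` is special (for order `m`) if it is cyclic of order `m` and
no non-identity element of it has `1` as an eigenvalue. -/
def IsSpecialSubgroup {n : ℕ} (m : ℕ)
    (F : Subgroup (Matrix.specialUnitaryGroup (Fin n) ℂ)) : Prop :=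
  IsCyclic F ∧ Nat.card F = m ∧
    ∀ g : Matrix.specialUnitaryGroup (Fin n) ℂ, g ∈ F → g ≠ 1 →
      (1 : ℂ) ∉ spectrum ℂ (g : Matrix (Fin n) (Fin n) ℂ)

/-- `SpCG n m` is the number of conjugacy classes of special cyclic subgroups of order `m`
in `SU(n)`. -/
noncomputable def SpCG (n m : ℕ) : ℕ :=
  Nat.card (Quot fun
      (F₁ F₂ : {F : Subgroup (Matrix.specialUnitaryGroup (Fin n) ℂ) // IsSpecialSubgroup m F}) =>
    ∃ g : Matrix.specialUnitaryGroup (Fin n) ℂ,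
      Subgroup.map (MulAut.conj g).toMonoidHom F₁.1 = F₂.1)

section PowersModQ

variable {M : Type*} [Monoid M] {q : ℕ} {x : M}

lemma pow_zmod_val_mul [NeZero q] (hx : x ^ q = 1) (a b : ZMod q) :
    x ^ (a * b).val = (x ^ a.val) ^ b.val := by
  rw [← pow_mul, ZMod.val_mul]
  exact pow_eq_pow_of_modEq (Nat.mod_modEq _ _) hx

lemma pow_zmod_val_one (hx : x ^ q = 1) : x ^ (1 : ZMod q).val = x := by
  rw [ZMod.val_one_eq_one_mod, pow_eq_pow_of_modEq (Nat.mod_modEq 1 q) hx, pow_one]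

lemma pow_zmod_val_pow_inv_val [NeZero q] (hx : x ^ q = 1) (k : (ZMod q)ˣ) :
    (x ^ (k : ZMod q).val) ^ ((k⁻¹ : (ZMod q)ˣ) : ZMod q).val = x := by
  rw [← pow_zmod_val_mul hx, Units.mul_inv, pow_zmod_val_one hx]

end PowersModQ

namespace Module.End

variable {K V : Type*} [Field K] [AddCommGroup V] [Module K V]

lemma eigenspace_le_eigenspace_pow (f : End K V) (μ : K) (m : ℕ) :
    f.eigenspace μ ≤ (f ^ m).eigenspace (μ ^ m) := by
  intro v hv
  rw [mem_eigenspace_iff] at hv ⊢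
  induction m with
  | zero => simp
  | succ m ih =>
    rw [pow_succ, Module.End.mul_apply, hv, map_smul, ih, smul_smul, pow_succ, mul_comm μ]

variable [FiniteDimensional K V]

lemma finrank_eigenspace_eq_rootMultiplicity_of_pow_eq_one {f : End K V} {q : ℕ}
    (hq : (q : K) ≠ 0) (hf : f ^ q = 1) (μ : K) :
    finrank K (f.eigenspace μ) = f.charpoly.rootMultiplicity μ := by
  have hsep : (X ^ q - C (1 : K)).Separable := separable_X_pow_sub_C 1 hq one_ne_zero
  have hss : f.IsSemisimple :=
    isSemisimple_of_squarefree_aeval_eq_zero hsep.squarefree (by simp [hf])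
  rw [← hss.isFinitelySemisimple.maxGenEigenspace_eq_eigenspace,
    LinearMap.finrank_maxGenEigenspace_eq]

lemma rootMultiplicity_charpoly_pow_zmod_val {f : End K V} {q : ℕ} [NeZero q]
    (hq : (q : K) ≠ 0) (hf : f ^ q = 1) {μ : K} (hμ : μ ^ q = 1) (k : (ZMod q)ˣ) :
    (f ^ (k : ZMod q).val).charpoly.rootMultiplicity (μ ^ (k : ZMod q).val) =
      f.charpoly.rootMultiplicity μ := by
  have hfk : (f ^ (k : ZMod q).val) ^ q = 1 := by rw [← pow_mul, mul_comm, pow_mul, hf, one_pow]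
  have heig : (f ^ (k : ZMod q).val).eigenspace (μ ^ (k : ZMod q).val) = f.eigenspace μ := by
    refine le_antisymm ?_ (eigenspace_le_eigenspace_pow f μ _)
    have := eigenspace_le_eigenspace_pow (f ^ (k : ZMod q).val) (μ ^ (k : ZMod q).val)
      ((k⁻¹ : (ZMod q)ˣ) : ZMod q).val
    rwa [pow_zmod_val_pow_inv_val hf, pow_zmod_val_pow_inv_val hμ] at this
  rw [← finrank_eigenspace_eq_rootMultiplicity_of_pow_eq_one hq hfk, heig,
    finrank_eigenspace_eq_rootMultiplicity_of_pow_eq_one hq hf]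

end Module.End

lemma pow_eq_one_of_mem_spectrum {K A : Type*} [Field K] [Ring A] [Algebra K A] {a : A} {q : ℕ}
    (ha : a ^ q = 1) {μ : K} (hμ : μ ∈ spectrum K a) : μ ^ q = 1 := by
  have : Nontrivial A := by
    rcases subsingleton_or_nontrivial A with h | h
    · simp [spectrum.of_subsingleton] at hμ
    · exact h
  simpa [ha, spectrum.one_eq] using spectrum.pow_image_subset a q ⟨μ, hμ, rfl⟩

theorem orderOf_dvd_sum_of_mul_right_invariant {G : Type*} [Group G] [Fintype G] (c : G → ℕ)
    (k : G) (hc : ∀ u, c (u * k) = c u) : orderOf k ∣ ∑ u, c u := by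
  classical
  set H := Subgroup.zpowers k with hH
  have hpow : ∀ (n : ℕ) (u : G), c (u * k ^ n) = c u := by
    intro n
    induction n with
    | zero => simp
    | succ n ih => intro u; rw [pow_succ, ← mul_assoc, hc, ih]
  have hconst : ∀ (t : G ⧸ H) (u : G), (u : G ⧸ H) = t → c u = c t.out := by
    rintro t u rfl
    obtain ⟨n, hn : k ^ n = _⟩ := (isOfFinOrder_of_finite k).mem_powers_iff_mem_zpowers.mpr
      (QuotientGroup.eq.mp (QuotientGroup.out_eq' (u : G ⧸ H)))
    rw [← hpow n (Quotient.out _), hn, mul_inv_cancel_left]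
  have hfiber : ∀ t : G ⧸ H, #{u : G | (u : G ⧸ H) = t} = orderOf k := by
    intro t
    have := QuotientGroup.card_preimage_mk H {t}
    simp only [hH, Nat.card_zpowers, Nat.card_unique, mul_one] at this
    rw [← Fintype.card_subtype, ← Nat.card_eq_fintype_card, ← this]
    rfl
  rw [← Finset.sum_fiberwise Finset.univ (fun u : G => (u : G ⧸ H)) c]
  refine Finset.dvd_sum fun t _ => ?_
  rw [Finset.sum_congr rfl fun u hu => hconst t u (Finset.mem_filter.mp hu).2, Finset.sum_const,
    hfiber, smul_eq_mul]
  exact dvd_mul_right _ _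

lemma sum_rootMultiplicity_pow_zmod_val {K : Type*} [Field K] {q : ℕ} [Fact q.Prime] {ζ : K}
    (hζ : IsPrimitiveRoot ζ q) {P : K[X]} (hP : ∀ μ ∈ P.roots, μ ^ q = 1 ∧ μ ≠ 1) :
    ∑ u : (ZMod q)ˣ, P.rootMultiplicity (ζ ^ (u : ZMod q).val) = Multiset.card P.roots := by
  classical
  have hinj : Function.Injective fun u : (ZMod q)ˣ => ζ ^ (u : ZMod q).val := fun u v h =>
    Units.ext (ZMod.val_injective q (hζ.pow_inj (ZMod.val_lt _) (ZMod.val_lt _) h))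
  simp_rw [← count_roots]
  calc ∑ u : (ZMod q)ˣ, P.roots.count (ζ ^ (u : ZMod q).val)
      = ∑ μ ∈ Finset.univ.image fun u : (ZMod q)ˣ => ζ ^ (u : ZMod q).val, P.roots.count μ :=
        by rw [Finset.sum_image fun u _ v _ h => hinj h]
    _ = Multiset.card P.roots := by
      refine Multiset.sum_count_eq_card fun μ hμ => ?_
      obtain ⟨hμq, hμ1⟩ := hP μ hμ
      obtain ⟨i, hi, rfl⟩ := hζ.eq_pow_of_pow_eq_one hμq
      have hi0 : (i : ZMod q) ≠ 0 := by
        intro h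
        have := congrArg ZMod.val h
        rw [ZMod.val_natCast_of_lt hi, ZMod.val_zero] at this
        exact hμ1 (by rw [this, pow_zero])
      refine Finset.mem_image.mpr ⟨(Ne.isUnit hi0).unit, Finset.mem_univ _, ?_⟩
      simp [ZMod.val_natCast_of_lt hi]

theorem Matrix.orderOf_dvd_card_of_charpoly_pow_eq {n : Type*} [Fintype n] [DecidableEq n]
    {q : ℕ} [hq : Fact q.Prime] {A : Matrix n n ℂ} (hA : A ^ q = 1)
    (h1 : (1 : ℂ) ∉ spectrum ℂ A) (k : (ZMod q)ˣ)
    (hk : (A ^ (k : ZMod q).val).charpoly = A.charpoly) : orderOf k ∣ Fintype.card n := by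
  have hζ := Complex.isPrimitiveRoot_exp q hq.out.ne_zero
  set ζ := Complex.exp (2 * Real.pi * Complex.I / q)
  set f := Matrix.toLinAlgEquiv' A
  have hf : f ^ q = 1 := by rw [← map_pow, hA, map_one]
  have hcharpoly : ∀ m : ℕ, (A ^ m).charpoly = (f ^ m).charpoly := fun m => by
    rw [← map_pow]; exact (Matrix.charpoly_toLin' _).symm
  have hroots : ∀ μ ∈ A.charpoly.roots, μ ^ q = 1 ∧ μ ≠ 1 := by
    intro μ hμ
    have hμA : μ ∈ spectrum ℂ A :=
      Matrix.mem_spectrum_iff_isRoot_charpoly.mpr (isRoot_of_mem_roots hμ)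
    exact ⟨pow_eq_one_of_mem_spectrum hA hμA, by rintro rfl; exact h1 hμA⟩
  have hq0 : (q : ℂ) ≠ 0 := Nat.cast_ne_zero.mpr hq.out.ne_zero
  have hinv (u : (ZMod q)ˣ) :
      A.charpoly.rootMultiplicity (ζ ^ ((u * k : (ZMod q)ˣ) : ZMod q).val) =
        A.charpoly.rootMultiplicity (ζ ^ (u : ZMod q).val) := by
    have hu : (ζ ^ (u : ZMod q).val) ^ q = 1 := by
      rw [← pow_mul, mul_comm, pow_mul, hζ.pow_eq_one, one_pow]
    calc A.charpoly.rootMultiplicity (ζ ^ ((u * k : (ZMod q)ˣ) : ZMod q).val)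
        = (f ^ (k : ZMod q).val).charpoly.rootMultiplicity
            ((ζ ^ (u : ZMod q).val) ^ (k : ZMod q).val) := by
          rw [Units.val_mul, pow_zmod_val_mul hζ.pow_eq_one, ← hcharpoly, hk]
      _ = f.charpoly.rootMultiplicity (ζ ^ (u : ZMod q).val) :=
          Module.End.rootMultiplicity_charpoly_pow_zmod_val hq0 hf hu k
      _ = A.charpoly.rootMultiplicity (ζ ^ (u : ZMod q).val) := by
          rw [← pow_one f, ← hcharpoly, pow_one]
  have hsum := sum_rootMultiplicity_pow_zmod_val hζ hroots
  rw [IsAlgClosed.card_roots_eq_natDegree, Matrix.charpoly_natDegree_eq_dim] at hsum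
  rw [← hsum]
  exact orderOf_dvd_sum_of_mul_right_invariant _ k hinv

section GeneratorClasses

variable {G : Type*} [Group G] {q : ℕ}

lemma zpowers_pow_zmod_val [NeZero q] {g : G} (hg : orderOf g = q) (k : (ZMod q)ˣ) :
    Subgroup.zpowers (g ^ (k : ZMod q).val) = Subgroup.zpowers g := by
  have hgq : g ^ q = 1 := hg ▸ pow_orderOf_eq_one g
  refine le_antisymm (Subgroup.zpowers_le.mpr (Subgroup.npow_mem_zpowers g _))
    (Subgroup.zpowers_le.mpr ?_)
  simpa only [pow_zmod_val_pow_inv_val hgq k] using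
    Subgroup.npow_mem_zpowers (g ^ (k : ZMod q).val) ((k⁻¹ : (ZMod q)ˣ) : ZMod q).val

lemma exists_pow_zmod_val_eq [hq : Fact q.Prime] {g x : G} (hg : orderOf g = q)
    (hx : x ∈ Subgroup.zpowers g) (hx1 : x ≠ 1) :
    ∃ k : (ZMod q)ˣ, g ^ (k : ZMod q).val = x := by
  have hfin : IsOfFinOrder g := orderOf_pos_iff.mp (hg ▸ hq.out.pos)
  obtain ⟨n, rfl⟩ := hfin.mem_powers_iff_mem_zpowers.mpr hx
  have hn : (n : ZMod q) ≠ 0 := fun h => hx1 <| orderOf_dvd_iff_pow_eq_one.mp <| by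
    rwa [hg, ← ZMod.natCast_eq_zero_iff]
  refine ⟨(Ne.isUnit hn).unit, ?_⟩
  rw [IsUnit.unit_spec, ZMod.val_natCast, ← hg, pow_mod_orderOf]

variable (Q : Subgroup G → Prop)

-- `SpCG n m` is by definition `Nat.card (Quot (IsConjSubgroup (IsSpecialSubgroup m)))`.
def IsConjSubgroup (F₁ F₂ : {F : Subgroup G // Q F}) : Prop :=
  ∃ g : G, Subgroup.map (MulAut.conj g).toMonoidHom F₁.1 = F₂.1

lemma isConjSubgroup_equivalence : Equivalence (IsConjSubgroup Q) where
  refl F := ⟨1, by ext; simp⟩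
  symm := by
    rintro F₁ F₂ ⟨g, hg⟩
    refine ⟨g⁻¹, ?_⟩
    rw [← hg, Subgroup.map_map]
    ext
    simp [MulAut.conj_apply, mul_assoc]
  trans := by
    rintro F₁ F₂ F₃ ⟨g, hg⟩ ⟨h, hh⟩
    refine ⟨h * g, ?_⟩
    rw [← hh, ← hg, Subgroup.map_map]
    congr 1
    ext
    simp [mul_assoc]

variable {Q}

lemma IsConjSubgroup.quot_mk_eq_iff {F₁ F₂ : {F : Subgroup G // Q F}} :
    Quot.mk (IsConjSubgroup Q) F₁ = Quot.mk _ F₂ ↔ IsConjSubgroup Q F₁ F₂ :=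
  Quot.eq.trans (isConjSubgroup_equivalence Q).eqvGen_iff

lemma injective_conjClass_pow_gen [Fact q.Prime] (hQ : ∀ F, Q F → Nat.card F = q)
    (hrigid : ∀ g : G, Q (Subgroup.zpowers g) →
      ∀ k : (ZMod q)ˣ, IsConj g (g ^ (k : ZMod q).val) → k = 1)
    {gen : Quot (IsConjSubgroup Q) → G} (hgen : ∀ b, Subgroup.zpowers (gen b) = b.out.1) :
    Function.Injective fun kb : (ZMod q)ˣ × Quot (IsConjSubgroup Q) =>
      ConjClasses.mk (gen kb.2 ^ (kb.1 : ZMod q).val) := by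
  have hord b : orderOf (gen b) = q := (Nat.card_zpowers _).symm.trans (hgen b ▸ hQ _ b.out.2)
  rintro ⟨k, b⟩ ⟨l, b'⟩ h
  have hc := ConjClasses.mk_eq_mk_iff_isConj.mp h
  obtain rfl : b = b' := by
    rw [← Quot.out_eq b, ← Quot.out_eq b', IsConjSubgroup.quot_mk_eq_iff]
    obtain ⟨c, hc⟩ := isConj_iff.mp hc
    refine ⟨c, ?_⟩
    rw [← hgen, ← hgen, ← zpowers_pow_zmod_val (hord b) k,
      ← zpowers_pow_zmod_val (hord b') l, MonoidHom.map_zpowers, ← hc]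
    rfl
  have hgq : gen b ^ q = 1 := hord b ▸ pow_orderOf_eq_one _
  have hpow : (gen b ^ (k : ZMod q).val) ^ ((k⁻¹ * l : (ZMod q)ˣ) : ZMod q).val =
      gen b ^ (l : ZMod q).val := by
    rw [← pow_zmod_val_mul hgq, ← Units.val_mul, mul_inv_cancel_left]
  have := hrigid _ (by rw [zpowers_pow_zmod_val (hord b), hgen]; exact b.out.2) _ (hpow ▸ hc)
  rw [inv_mul_eq_one.mp this]

lemma exists_conjClass_pow_gen_eq [hq : Fact q.Prime] (hQ : ∀ F, Q F → Nat.card F = q)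
    {gen : Quot (IsConjSubgroup Q) → G} (hgen : ∀ b, Subgroup.zpowers (gen b) = b.out.1)
    {g : G} (hg : Q (Subgroup.zpowers g)) :
    ∃ kb : (ZMod q)ˣ × Quot (IsConjSubgroup Q),
      ConjClasses.mk (gen kb.2 ^ (kb.1 : ZMod q).val) = ConjClasses.mk g := by
  set b := Quot.mk (IsConjSubgroup Q) ⟨_, hg⟩
  obtain ⟨c, hc⟩ := IsConjSubgroup.quot_mk_eq_iff.mp (Quot.out_eq b)
  replace hc : Subgroup.zpowers (c * gen b * c⁻¹) = Subgroup.zpowers g := by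
    rw [← hgen, MonoidHom.map_zpowers] at hc
    exact hc
  have hg1 : g ≠ 1 := by
    rintro rfl
    have := hQ _ hg
    rw [Subgroup.zpowers_one_eq_bot, Subgroup.card_bot] at this
    exact hq.out.one_lt.ne this
  obtain ⟨k, hk⟩ := exists_pow_zmod_val_eq ((Nat.card_zpowers _).symm.trans (hc ▸ hQ _ hg))
    (hc ▸ Subgroup.mem_zpowers g) hg1
  refine ⟨(k, b), ConjClasses.mk_eq_mk_iff_isConj.mpr (isConj_iff.mpr ⟨c, ?_⟩)⟩
  rw [← hk, conj_pow]

theorem card_conjClasses_of_generators_eq_mul_card [Fact q.Prime]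
    (hQ : ∀ F, Q F → Nat.card F = q)
    (hrigid : ∀ g : G, Q (Subgroup.zpowers g) →
      ∀ k : (ZMod q)ˣ, IsConj g (g ^ (k : ZMod q).val) → k = 1) :
    Nat.card {c : ConjClasses G // ∃ g, ConjClasses.mk g = c ∧ Q (Subgroup.zpowers g)} =
      (q - 1) * Nat.card (Quot (IsConjSubgroup Q)) := by
  choose gen hgen using fun b : Quot (IsConjSubgroup Q) =>
    (b.out.1.isCyclic_iff_exists_zpowers_eq_top).mp (isCyclic_of_prime_card (hQ _ b.out.2))
  have hQgen (kb : (ZMod q)ˣ × Quot (IsConjSubgroup Q)) :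
      Q (Subgroup.zpowers (gen kb.2 ^ (kb.1 : ZMod q).val)) := by
    rw [zpowers_pow_zmod_val ((Nat.card_zpowers _).symm.trans (hgen kb.2 ▸ hQ _ kb.2.out.2)),
      hgen]
    exact kb.2.out.2
  let Φ (kb : (ZMod q)ˣ × Quot (IsConjSubgroup Q)) :
      {c : ConjClasses G // ∃ g, ConjClasses.mk g = c ∧ Q (Subgroup.zpowers g)} :=
    ⟨ConjClasses.mk (gen kb.2 ^ (kb.1 : ZMod q).val), _, rfl, hQgen kb⟩
  have hΦ : Function.Bijective Φ := by
    refine ⟨fun kb kb' h => injective_conjClass_pow_gen hQ hrigid hgen (congrArg Subtype.val h),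
      ?_⟩
    rintro ⟨_, g, rfl, hg⟩
    obtain ⟨kb, hkb⟩ := exists_conjClass_pow_gen_eq hQ hgen hg
    exact ⟨kb, Subtype.ext hkb⟩
  rw [← Nat.card_congr (Equiv.ofBijective Φ hΦ), Nat.card_prod, Nat.card_eq_fintype_card,
    ZMod.card_units]

end GeneratorClasses

lemma Matrix.charpoly_eq_of_isConj {R n : Type*} [CommRing R] [Fintype n] [DecidableEq n]
    {A B : Matrix n n R} (h : IsConj A B) : A.charpoly = B.charpoly := by
  obtain ⟨c, hc⟩ := h
  have hA : A = (c : Matrix n n R)⁻¹ * B * c := by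
    rw [mul_assoc, ← hc.eq, ← Matrix.coe_units_inv, Units.inv_mul_cancel_left]
  rw [hA, Matrix.charpoly_units_conj']

section SpecialUnitary

variable {n q : ℕ}

lemma isSpecialSubgroup_zpowers_iff [hq : Fact q.Prime]
    (g : Matrix.specialUnitaryGroup (Fin n) ℂ) :
    IsSpecialSubgroup q (Subgroup.zpowers g) ↔
      orderOf g = q ∧ (1 : ℂ) ∉ spectrum ℂ (g : Matrix (Fin n) (Fin n) ℂ) := by
  constructor
  · rintro ⟨-, hcard, hspec⟩
    have hg : orderOf g = q := by rw [← Nat.card_zpowers, hcard]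
    refine ⟨hg, hspec g (Subgroup.mem_zpowers g) ?_⟩
    rintro rfl
    exact hq.out.one_lt.ne (orderOf_one.symm.trans hg)
  · rintro ⟨hg, h1⟩
    refine ⟨inferInstance, by rw [Nat.card_zpowers, hg], fun x hx hx1 hx1spec => h1 ?_⟩
    obtain ⟨k, rfl⟩ := exists_pow_zmod_val_eq hg hx hx1
    have := spectrum.pow_image_subset _ ((k⁻¹ : (ZMod q)ˣ) : ZMod q).val
      ⟨1, hx1spec, one_pow _⟩
    rwa [← SubmonoidClass.coe_pow, pow_zmod_val_pow_inv_val (hg ▸ pow_orderOf_eq_one g)] at this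

lemma eq_one_of_isConj_pow_zmod_val {p : ℕ} (hp : p.Prime) (hpq : ¬ p ∣ q - 1) [Fact q.Prime]
    {g : Matrix.specialUnitaryGroup (Fin p) ℂ} (hg : orderOf g = q)
    (h1 : (1 : ℂ) ∉ spectrum ℂ (g : Matrix (Fin p) (Fin p) ℂ)) (k : (ZMod q)ˣ)
    (hc : IsConj g (g ^ (k : ZMod q).val)) : k = 1 := by
  have hA : (g : Matrix (Fin p) (Fin p) ℂ) ^ q = 1 := by
    rw [← SubmonoidClass.coe_pow, ← hg, pow_orderOf_eq_one]; rfl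
  have hk : ((g : Matrix (Fin p) (Fin p) ℂ) ^ (k : ZMod q).val).charpoly =
      (g : Matrix (Fin p) (Fin p) ℂ).charpoly := by
    rw [← SubmonoidClass.coe_pow]
    exact (Matrix.charpoly_eq_of_isConj
      ((Matrix.specialUnitaryGroup (Fin p) ℂ).subtype.map_isConj hc)).symm
  have hdvd_p := Matrix.orderOf_dvd_card_of_charpoly_pow_eq hA h1 k hk
  rw [Fintype.card_fin] at hdvd_p
  have hdvd_q : orderOf k ∣ q - 1 := ZMod.card_units q ▸ orderOf_dvd_card
  rcases hp.eq_one_or_self_of_dvd _ hdvd_p with h | h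
  · exact orderOf_eq_one_iff.mp h
  · exact absurd (h ▸ hdvd_q) hpq

end SpecialUnitary

theorem stmt15_general (p q : ℕ) (hp : p.Prime) (hq : q.Prime) (hpq : ¬ p ∣ (q - 1)) :
    Nat.card {c : ConjClasses (Matrix.specialUnitaryGroup (Fin p) ℂ) //
      ∃ g : Matrix.specialUnitaryGroup (Fin p) ℂ,
        ConjClasses.mk g = c ∧ orderOf g = q ∧
          (1 : ℂ) ∉ spectrum ℂ (g : Matrix (Fin p) (Fin p) ℂ)} =
    (q - 1) * SpCG p q := by
  have : Fact q.Prime := ⟨hq⟩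
  simp only [← isSpecialSubgroup_zpowers_iff]
  refine card_conjClasses_of_generators_eq_mul_card (fun F hF => hF.2.1) fun g hg k hc => ?_
  obtain ⟨hord, h1⟩ := (isSpecialSubgroup_zpowers_iff g).mp hg
  exact eq_one_of_isConj_pow_zmod_val hp hpq hord h1 k hc

theorem stmt15 (p q : ℕ) (hp : p.Prime) (hq : q.Prime) (hne : p ≠ q) (hpq : ¬ p ∣ (q - 1)) :
    Nat.card {c : ConjClasses (Matrix.specialUnitaryGroup (Fin p) ℂ) //
      ∃ g : Matrix.specialUnitaryGroup (Fin p) ℂ,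
        ConjClasses.mk g = c ∧ orderOf g = q ∧
          (1 : ℂ) ∉ spectrum ℂ (g : Matrix (Fin p) (Fin p) ℂ)} =
    (q - 1) * SpCG p q :=
  stmt15_general p q hp hq hpq
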